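/- arXiv:1912.07422 — 2 statements merged into one kernel-verified Lean document; each statement's English description precedes it below -/
import Mathlib

section
/- Let 0 < ρ < 1, let α ∈ (0,1) be the unique solution of x^x (1−x)^{1−x} = ρ^x, set h_N = ⌊α(N−1)⌋, C₂ = 3/(log α − log ρ) and C₃ = α(3+ρ)/ρ². Then for all sufficiently large N, h_N − ⌊C₂ log N⌋ − C₃ ≤ E(H_N) ≤ h_N + 1. -/
open Finset Filter Real Topology

/-- `r_{ρ,n}(i) = ρ^{-i} * C(n-1, i)^{-1}`. -/
noncomputable def rfun (ρ : ℝ) (n i : ℕ) : ℝ := (ρ ^ i * (Nat.choose (n - 1) i : ℝ))⁻¹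

/-- `P(H_N ≥ k)` for `k = 1,…,N`, and `0` for `k > N`. -/
noncomputable def tailP (ρ : ℝ) (N k : ℕ) : ℝ :=
  if k ≤ N then (∑ i ∈ Finset.range k, rfun ρ N i)⁻¹ else 0

/-- `P(H_N = k) = P(H_N ≥ k) − P(H_N ≥ k+1)`. -/
noncomputable def pmfP (ρ : ℝ) (N k : ℕ) : ℝ := tailP ρ N k - tailP ρ N (k + 1)

/-- `E(H_N) = ∑_{k=1}^N P(H_N ≥ k)`. -/
noncomputable def EH (ρ : ℝ) (N : ℕ) : ℝ := ∑ k ∈ Finset.Icc 1 N, tailP ρ N k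

/-- `Var(H_N) = ∑_{k=1}^N (k − E(H_N))² P(H_N = k)`. -/
noncomputable def VarH (ρ : ℝ) (N : ℕ) : ℝ :=
  ∑ k ∈ Finset.Icc 1 N, ((k : ℝ) - EH ρ N) ^ 2 * pmfP ρ N k

/-- `P(H_N ≤ t)` for a real threshold `t`. -/
noncomputable def cdfP (ρ : ℝ) (N : ℕ) (t : ℝ) : ℝ :=
  ∑ k ∈ (Finset.Icc 1 N).filter (fun k : ℕ => (k : ℝ) ≤ t), pmfP ρ N k

/-!
Write `b(i) = ρ ^ i * C(N - 1, i)`, so that `P(H_N ≥ k) = 1 / ∑_{i < k} 1 / b(i)`. The ratio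
`b(i + 1) / b(i) = ρ (N - 1 - i) / (i + 1)` decreases in `i`, so the weights are unimodal, and
up to polynomial factors `b(h) = exp ((N - 1) φ(h / (N - 1)))` with `φ(x) = x log ρ + H(x)`
(`H` the binary entropy), which vanishes at `x = α`.

Upper bound: past `h = ⌊α (N - 1)⌋` the ratio stays below some `q < 1`, so
`P(H_N ≥ h + 1 + j) ≤ b(h + j) ≤ q ^ j b(h)`, and Stirling's formula gives `b(h) = O(1 / √N)`;
the terms beyond `h` therefore add at most `1`.

Lower bound: `1 / S ≥ 2 - S` gives `E(H_N) ≥ K - K ∑_{1 ≤ i < K} 1 / b(i)`, where we take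
`K = h - ⌊C₂ log N⌋`. Since `b(h) ≥ 1 / N` and, below `h` down to `β (N - 1)` for some `β < α`, the
weights grow by the factor `(α / ρ) ^ (3 / 4)` per step, the terms `i ≥ β (N - 1)` add
`O(N ^ 2 · N ^ (-9 / 4))`; unimodality bounds those with `3 ≤ i < β (N - 1)` by
`1 / b(3) + 1 / b(β (N - 1))`, and `i = 1, 2` give `α / ρ + o(1)`.
-/

noncomputable def binomWeight (ρ : ℝ) (m i : ℕ) : ℝ := ρ ^ i * (m.choose i : ℝ)

namespace binomWeight

variable {ρ c : ℝ} {m i j k : ℕ}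

lemma nonneg (hρ : 0 ≤ ρ) : 0 ≤ binomWeight ρ m i := by
  unfold binomWeight; positivity

lemma pos (hρ : 0 < ρ) (h : i ≤ m) : 0 < binomWeight ρ m i := by
  have : (0 : ℝ) < m.choose i := by exact_mod_cast Nat.choose_pos h
  unfold binomWeight; positivity

lemma one_right (ρ : ℝ) (m : ℕ) : binomWeight ρ m 1 = ρ * m := by simp [binomWeight]

lemma succ_mul (ρ : ℝ) (m i : ℕ) :
    binomWeight ρ m (i + 1) * (i + 1) = binomWeight ρ m i * (ρ * (m - i)) := by
  rcases le_or_gt i m with h | h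
  · have key : ((m.choose (i + 1) * (i + 1) : ℕ) : ℝ) = (m.choose i * (m - i) : ℕ) :=
      congrArg _ (Nat.choose_succ_right_eq m i)
    push_cast [Nat.cast_sub h] at key
    unfold binomWeight
    linear_combination ρ ^ (i + 1) * key
  · simp [binomWeight, Nat.choose_eq_zero_of_lt h,
      Nat.choose_eq_zero_of_lt (h.trans i.lt_succ_self)]

lemma succ_le (hρ : 0 ≤ ρ) (h : ρ * (m - i) ≤ c * (i + 1)) :
    binomWeight ρ m (i + 1) ≤ c * binomWeight ρ m i := by
  refine le_of_mul_le_mul_right ?_ (by positivity : (0 : ℝ) < i + 1)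
  calc binomWeight ρ m (i + 1) * (i + 1) = binomWeight ρ m i * (ρ * (m - i)) := succ_mul ρ m i
    _ ≤ binomWeight ρ m i * (c * (i + 1)) := mul_le_mul_of_nonneg_left h (nonneg hρ)
    _ = c * binomWeight ρ m i * (i + 1) := by ring

lemma le_succ (hρ : 0 ≤ ρ) (h : (i : ℝ) + 1 ≤ ρ * (m - i)) :
    binomWeight ρ m i ≤ binomWeight ρ m (i + 1) := by
  refine le_of_mul_le_mul_right ?_ (by positivity : (0 : ℝ) < i + 1)
  rw [succ_mul]
  exact mul_le_mul_of_nonneg_left h (nonneg hρ)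

/-- Since the ratio `ρ (m - t) / (t + 1)` of consecutive weights decreases in `t`, a bound on it
at `i` bounds all later ratios. -/
lemma add_le_pow_mul (hρ : 0 ≤ ρ) (hc : 0 ≤ c) (h : ρ * (m - i) ≤ c * (i + 1)) (n : ℕ) :
    binomWeight ρ m (i + n) ≤ c ^ n * binomWeight ρ m i := by
  induction n with
  | zero => simp
  | succ n ih =>
    have hstep : ρ * (m - (i + n : ℕ)) ≤ c * ((i + n : ℕ) + 1) := by
      push_cast
      have hn : (0 : ℝ) ≤ n := n.cast_nonneg
      nlinarith [mul_nonneg hρ hn, mul_nonneg hc hn]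
    calc binomWeight ρ m (i + (n + 1)) ≤ c * binomWeight ρ m (i + n) := succ_le hρ hstep
      _ ≤ c * (c ^ n * binomWeight ρ m i) := mul_le_mul_of_nonneg_left ih hc
      _ = c ^ (n + 1) * binomWeight ρ m i := by ring

lemma antitoneOn (hρ : 0 ≤ ρ) (h : ρ * (m - i) ≤ i + 1) :
    AntitoneOn (binomWeight ρ m) (Set.Ici i) := by
  intro a ha b _ hab
  obtain ⟨n, rfl⟩ := Nat.exists_eq_add_of_le hab
  obtain ⟨l, rfl⟩ := Nat.exists_eq_add_of_le (Set.mem_Ici.mp ha)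
  have hl : ρ * (m - (i + l : ℕ)) ≤ 1 * ((i + l : ℕ) + 1) := by
    push_cast
    nlinarith [mul_nonneg hρ (l.cast_nonneg : (0 : ℝ) ≤ l)]
  simpa using add_le_pow_mul hρ zero_le_one hl n

lemma monotoneOn (hρ : 0 ≤ ρ) (h : (j : ℝ) ≤ ρ * (m - j + 1)) :
    MonotoneOn (binomWeight ρ m) (Set.Iic j) := by
  refine monotoneOn_of_le_succ Set.ordConnected_Iic fun a _ _ ha => ?_
  rw [Order.succ_eq_add_one] at ha ⊢
  have ha' : ((a + 1 : ℕ) : ℝ) ≤ j := by exact_mod_cast ha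
  push_cast at ha'
  exact le_succ hρ (by nlinarith)

lemma min_le (hρ : 0 ≤ ρ) (hji : j ≤ i) (hik : i ≤ k) :
    min (binomWeight ρ m j) (binomWeight ρ m k) ≤ binomWeight ρ m i := by
  by_cases h : (i : ℝ) ≤ ρ * (m - i + 1)
  · exact min_le_of_left_le <| monotoneOn hρ h (Set.mem_Iic.mpr hji) Set.self_mem_Iic hji
  · refine min_le_of_right_le <| antitoneOn hρ ?_ Set.self_mem_Ici (Set.mem_Ici.mpr hik) hik
    push Not at h
    nlinarith

end binomWeight

section TailProbabilities

variable {ρ q : ℝ} {N m h j k K : ℕ}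

lemma rfun_succ (ρ : ℝ) (m i : ℕ) : rfun ρ (m + 1) i = (binomWeight ρ m i)⁻¹ := rfl

lemma rfun_nonneg (hρ : 0 ≤ ρ) (N i : ℕ) : 0 ≤ rfun ρ N i := by
  unfold rfun; positivity

lemma one_le_sum_rfun (hρ : 0 ≤ ρ) (hk : 1 ≤ k) : 1 ≤ ∑ i ∈ range k, rfun ρ N i := by
  have h0 : rfun ρ N 0 = 1 := by simp [rfun]
  exact h0 ▸ single_le_sum (fun i _ => rfun_nonneg hρ N i) (mem_range.mpr hk)

lemma tailP_nonneg (hρ : 0 ≤ ρ) (N k : ℕ) : 0 ≤ tailP ρ N k := by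
  unfold tailP
  split_ifs
  exacts [inv_nonneg.mpr (sum_nonneg fun i _ => rfun_nonneg hρ N i), le_rfl]

lemma tailP_le_one (hρ : 0 ≤ ρ) (hk : 1 ≤ k) : tailP ρ N k ≤ 1 := by
  unfold tailP
  split_ifs
  exacts [inv_le_one_of_one_le₀ (one_le_sum_rfun hρ hk), zero_le_one]

lemma tailP_le_binomWeight (hρ : 0 < ρ) (hjk : j < k) : tailP ρ (m + 1) k ≤ binomWeight ρ m j := by
  unfold tailP
  split_ifs with hk
  · have hb := binomWeight.pos hρ (by omega : j ≤ m)
    refine inv_le_of_inv_le₀ hb ?_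
    rw [← rfun_succ]
    exact single_le_sum (fun i _ => rfun_nonneg hρ.le _ i) (mem_range.mpr hjk)
  · exact binomWeight.nonneg hρ.le

lemma two_sub_sum_le_tailP (hρ : 0 ≤ ρ) (hk : 1 ≤ k) (hkN : k ≤ N) :
    2 - ∑ i ∈ range k, rfun ρ N i ≤ tailP ρ N k := by
  have hS := one_le_sum_rfun (N := N) hρ hk
  rw [tailP, if_pos hkN]
  set S := ∑ i ∈ range k, rfun ρ N i
  have : S * S⁻¹ = 1 := mul_inv_cancel₀ (by positivity)
  nlinarith [sq_nonneg (S - 1), inv_pos.mpr (by positivity : 0 < S)]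

theorem EH_le_add_binomWeight_div (hρ : 0 < ρ) (hq0 : 0 ≤ q) (hq1 : q < 1)
    (hratio : ρ * (m - h) ≤ q * (h + 1)) :
    EH ρ (m + 1) ≤ h + binomWeight ρ m h / (1 - q) := by
  have hzero : ∀ k ∈ Ico 1 (h + 1 + (m + 1)), k ∉ Icc 1 (m + 1) → tailP ρ (m + 1) k = 0 := by
    intro k hk' hk
    simp only [mem_Ico, mem_Icc, not_and_or, not_le] at hk' hk
    rw [tailP, if_neg (by omega)]
  have hlow : ∑ k ∈ Ico 1 (h + 1), tailP ρ (m + 1) k ≤ h := by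
    calc ∑ k ∈ Ico 1 (h + 1), tailP ρ (m + 1) k ≤ ∑ k ∈ Ico 1 (h + 1), (1 : ℝ) :=
          sum_le_sum fun k hk => tailP_le_one hρ.le (mem_Ico.mp hk).1
      _ = h := by simp
  have hhigh : ∑ k ∈ Ico (h + 1) (h + 1 + (m + 1)), tailP ρ (m + 1) k
      ≤ binomWeight ρ m h / (1 - q) := by
    rw [sum_Ico_eq_sum_range, Nat.add_sub_cancel_left]
    calc ∑ j ∈ range (m + 1), tailP ρ (m + 1) (h + 1 + j)
        ≤ ∑ j ∈ range (m + 1), binomWeight ρ m h * q ^ j := by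
          refine sum_le_sum fun j _ =>
            (tailP_le_binomWeight hρ (by omega : h + j < h + 1 + j)).trans ?_
          rw [mul_comm]
          exact binomWeight.add_le_pow_mul hρ.le hq0 hratio j
      _ = binomWeight ρ m h * ∑ j ∈ Ico 0 (m + 1), q ^ j := by rw [mul_sum, range_eq_Ico]
      _ ≤ binomWeight ρ m h * (q ^ 0 / (1 - q)) :=
          mul_le_mul_of_nonneg_left (geom_sum_Ico_le_of_lt_one hq0 hq1) (binomWeight.nonneg hρ.le)
      _ = binomWeight ρ m h / (1 - q) := by ring
  calc EH ρ (m + 1) = ∑ k ∈ Ico 1 (h + 1 + (m + 1)), tailP ρ (m + 1) k :=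
        sum_subset (fun k hk => by simp only [mem_Icc, mem_Ico] at hk ⊢; omega) hzero
    _ = _ := (sum_Ico_consecutive _ (Nat.le_add_left 1 h) (Nat.le_add_right _ _)).symm
    _ ≤ h + binomWeight ρ m h / (1 - q) := add_le_add hlow hhigh

theorem sub_mul_sum_rfun_le_EH (hρ : 0 ≤ ρ) (hKN : K ≤ N) :
    K - K * ∑ i ∈ Ico 1 K, rfun ρ N i ≤ EH ρ N := by
  set R := ∑ i ∈ Ico 1 K, rfun ρ N i
  have hpoint : ∀ k ∈ Icc 1 K, 1 - R ≤ tailP ρ N k := by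
    intro k hk
    obtain ⟨hk1, hkK⟩ := mem_Icc.mp hk
    have hsplit : ∑ i ∈ range k, rfun ρ N i = 1 + ∑ i ∈ Ico 1 k, rfun ρ N i := by
      rw [range_eq_Ico, sum_eq_sum_Ico_succ_bot (by omega)]
      simp [rfun]
    have hsub : ∑ i ∈ Ico 1 k, rfun ρ N i ≤ R :=
      sum_le_sum_of_subset_of_nonneg (Ico_subset_Ico_right hkK) fun i _ _ => rfun_nonneg hρ N i
    linarith [two_sub_sum_le_tailP hρ hk1 (hkK.trans hKN)]
  calc (K : ℝ) - K * R = ∑ k ∈ Icc 1 K, (1 - R) := by simp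
    _ ≤ ∑ k ∈ Icc 1 K, tailP ρ N k := sum_le_sum hpoint
    _ ≤ EH ρ N := sum_le_sum_of_subset_of_nonneg (Icc_subset_Icc_right hKN)
        fun k _ _ => tailP_nonneg hρ N k

end TailProbabilities

section InverseWeights

variable {ρ α z : ℝ} {m h i i₁ K : ℕ}

lemma inv_binomWeight_le_mul_pow (hρ : 0 ≤ ρ) (hz : 0 ≤ z) (hratio : ρ * (m - i) ≤ z * (i + 1))
    (hih : i ≤ h) (hbh : ((m : ℝ) + 1)⁻¹ ≤ binomWeight ρ m h) :
    (binomWeight ρ m i)⁻¹ ≤ (m + 1) * z ^ (h - i) := by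
  have hgeom : binomWeight ρ m h ≤ z ^ (h - i) * binomWeight ρ m i := by
    simpa [Nat.add_sub_cancel' hih] using binomWeight.add_le_pow_mul hρ hz hratio (h - i)
  have hpos : 0 < z ^ (h - i) * binomWeight ρ m i := hbh.trans_lt' (by positivity) |>.trans_le hgeom
  have hb : 0 < binomWeight ρ m i := pos_of_mul_pos_right hpos (by positivity)
  rw [inv_le_iff_one_le_mul₀ hb]
  calc (1 : ℝ) ≤ (m + 1) * binomWeight ρ m h := by
        rwa [inv_le_iff_one_le_mul₀' (by positivity)] at hbh
    _ ≤ (m + 1) * (z ^ (h - i) * binomWeight ρ m i) := by gcongr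
    _ = _ := by ring

lemma sum_range_pow_sub_le (hz0 : 0 ≤ z) (hz1 : z < 1) (hK : K ≤ h + 1) :
    ∑ i ∈ range K, z ^ (h - i) ≤ z ^ (h + 1 - K) / (1 - z) := by
  rw [range_eq_Ico, sum_Ico_reflect (fun j => z ^ j) 0 hK]
  exact geom_sum_Ico_le_of_lt_one hz0 hz1

/-- Beyond `i₁` the weights decay geometrically towards `h`, where they are still at least
`1 / (m + 1)`; below `i₁` unimodality bounds them below by `min (b 3) (b i₁)`. -/
lemma sum_Ico_inv_binomWeight_le (hρ : 0 < ρ) (hz0 : 0 ≤ z) (hz1 : z < 1) (hi₁K : i₁ ≤ K)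
    (hKh : K ≤ h) (hhm : h ≤ m) (hratio : ρ * (m - i₁) ≤ z * (i₁ + 1))
    (hbh : ((m : ℝ) + 1)⁻¹ ≤ binomWeight ρ m h) :
    ∑ i ∈ Ico 3 K, (binomWeight ρ m i)⁻¹ ≤
      K * ((binomWeight ρ m 3)⁻¹ + (m + 1) * z ^ (h - i₁)) +
        (m + 1) * (z ^ (h + 1 - K) / (1 - z)) := by
  have hnear : ∀ i, i₁ ≤ i → i ≤ h → (binomWeight ρ m i)⁻¹ ≤ (m + 1) * z ^ (h - i) := by
    intro i hi hih
    refine inv_binomWeight_le_mul_pow hρ.le hz0 ?_ hih hbh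
    have : (i₁ : ℝ) ≤ i := by exact_mod_cast hi
    nlinarith
  have hpoint : ∀ i ∈ Ico 3 K, (binomWeight ρ m i)⁻¹ ≤
      ((binomWeight ρ m 3)⁻¹ + (m + 1) * z ^ (h - i₁)) + (m + 1) * z ^ (h - i) := by
    intro i hi
    obtain ⟨h3i, hiK⟩ := mem_Ico.mp hi
    have hfar := hnear i₁ le_rfl (hi₁K.trans hKh)
    have hz := (by positivity : 0 ≤ (m + 1 : ℝ) * z ^ (h - i))
    rcases lt_or_ge i i₁ with hii₁ | hii₁
    · have hmin := binomWeight.min_le hρ.le h3i hii₁.le (m := m)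
      have h3 := binomWeight.pos hρ (by omega : 3 ≤ m)
      have hi₁ := binomWeight.pos hρ (by omega : i₁ ≤ m)
      have hinv := inv_anti₀ (lt_min h3 hi₁) hmin
      rcases min_choice (binomWeight ρ m 3) (binomWeight ρ m i₁) with hm | hm <;> rw [hm] at hinv
      · linarith [inv_nonneg.mpr hi₁.le, (by positivity : 0 ≤ (m + 1 : ℝ) * z ^ (h - i₁))]
      · linarith [inv_nonneg.mpr h3.le]
    · linarith [hnear i hii₁ (by omega),
        inv_nonneg.mpr (binomWeight.nonneg hρ.le (m := m) (i := 3)),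
        (by positivity : 0 ≤ (m + 1 : ℝ) * z ^ (h - i₁))]
  calc ∑ i ∈ Ico 3 K, (binomWeight ρ m i)⁻¹
      ≤ ∑ i ∈ Ico 3 K, (((binomWeight ρ m 3)⁻¹ + (m + 1) * z ^ (h - i₁)) + (m + 1) * z ^ (h - i)) :=
        sum_le_sum hpoint
    _ ≤ K * ((binomWeight ρ m 3)⁻¹ + (m + 1) * z ^ (h - i₁)) +
          (m + 1) * ∑ i ∈ range K, z ^ (h - i) := by
        rw [sum_add_distrib, sum_const, Nat.card_Ico, nsmul_eq_mul, ← mul_sum]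
        gcongr
        · exact add_nonneg (inv_nonneg.mpr (binomWeight.nonneg hρ.le)) (by positivity)
        · exact_mod_cast Nat.sub_le K 3
        · exact fun i hi => by simp only [mem_Ico, mem_range] at hi ⊢; omega
    _ ≤ _ := by gcongr; exact sum_range_pow_sub_le hz0 hz1 (by omega)

theorem le_EH_of_geometric_growth (hρ : 0 < ρ) (hz0 : 0 ≤ z) (hz1 : z < 1) (h3 : 3 ≤ i₁)
    (hi₁K : i₁ ≤ K) (hKh : K ≤ h) (hhm : h ≤ m) (hKα : (K : ℝ) ≤ α * m)
    (hratio : ρ * (m - i₁) ≤ z * (i₁ + 1)) (hbh : ((m : ℝ) + 1)⁻¹ ≤ binomWeight ρ m h) {A B : ℝ}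
    (hA : z ^ (h - i₁) ≤ A) (hB : z ^ (h + 1 - K) ≤ B) :
    K - α / ρ - (m * (binomWeight ρ m 2)⁻¹ + m ^ 2 * (binomWeight ρ m 3)⁻¹ +
      m ^ 2 * (m + 1) * A + (m + 1) ^ 2 * (B / (1 - z))) ≤ EH ρ (m + 1) := by
  have hKm : (K : ℝ) ≤ m := by exact_mod_cast hKh.trans hhm
  have hm0 : (0 : ℝ) < m := by exact_mod_cast (by omega : 0 < m)
  have hz1' : 0 < 1 - z := sub_pos.mpr hz1
  have hA0 : 0 ≤ A := (pow_nonneg hz0 _).trans hA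
  have hB0 : 0 ≤ B / (1 - z) := div_nonneg ((pow_nonneg hz0 _).trans hB) hz1'.le
  have hinv : ∀ i, 0 ≤ (binomWeight ρ m i)⁻¹ := fun i => inv_nonneg.mpr (binomWeight.nonneg hρ.le)
  have hsplit : ∑ i ∈ Ico 1 K, (binomWeight ρ m i)⁻¹ =
      (binomWeight ρ m 1)⁻¹ + (binomWeight ρ m 2)⁻¹ + ∑ i ∈ Ico 3 K, (binomWeight ρ m i)⁻¹ := by
    rw [← sum_Ico_consecutive _ (by norm_num : 1 ≤ 3) (by omega : 3 ≤ K)]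
    simp [sum_Ico_succ_top]
  have hone : K * (binomWeight ρ m 1)⁻¹ ≤ α / ρ := by
    rw [binomWeight.one_right, ← div_eq_mul_inv, div_le_div_iff₀ (by positivity) hρ]
    nlinarith
  have hbulk : ∑ i ∈ Ico 3 K, (binomWeight ρ m i)⁻¹ ≤
      m * ((binomWeight ρ m 3)⁻¹ + (m + 1) * A) + (m + 1) * (B / (1 - z)) := by
    refine (sum_Ico_inv_binomWeight_le hρ hz0 hz1 hi₁K hKh hhm hratio hbh).trans ?_
    gcongr
    exact add_nonneg (hinv 3) (by positivity)
  have hmain : K * ∑ i ∈ Ico 1 K, (binomWeight ρ m i)⁻¹ ≤ α / ρ + (m * (binomWeight ρ m 2)⁻¹ +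
      m ^ 2 * (binomWeight ρ m 3)⁻¹ + m ^ 2 * (m + 1) * A + (m + 1) ^ 2 * (B / (1 - z))) := by
    rw [hsplit]
    have h2 : K * (binomWeight ρ m 2)⁻¹ ≤ m * (binomWeight ρ m 2)⁻¹ := by gcongr; exact hinv 2
    have h3 : K * ∑ i ∈ Ico 3 K, (binomWeight ρ m i)⁻¹ ≤
        m * (m * ((binomWeight ρ m 3)⁻¹ + (m + 1) * A) + (m + 1) * (B / (1 - z))) :=
      mul_le_mul hKm hbulk (sum_nonneg fun i _ => hinv i) (by positivity)
    nlinarith [mul_nonneg (m.cast_nonneg (α := ℝ)) hB0]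
  have := sub_mul_sum_rfun_le_EH (N := m + 1) hρ.le (by omega : K ≤ m + 1)
  simp only [rfun_succ] at this
  linarith

end InverseWeights

noncomputable def binomExponent (ρ x : ℝ) : ℝ := x * log ρ + binEntropy x

section BinomExponent

variable {ρ α x : ℝ}

lemma binomExponent_eq_zero (hρ : 0 < ρ) (hα0 : 0 < α) (hα1 : α < 1)
    (hsol : α ^ α * (1 - α) ^ (1 - α) = ρ ^ α) : binomExponent ρ α = 0 := by
  have hlog := congrArg log hsol
  rw [log_mul (by positivity) (by positivity), log_rpow hα0, log_rpow (by linarith),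
    log_rpow hρ] at hlog
  simp only [binomExponent, binEntropy, log_inv]
  linarith

lemma lt_of_binomExponent_eq_zero (hα0 : 0 < α) (hα1 : α < 1)
    (hφ : binomExponent ρ α = 0) : ρ < α := by
  by_contra! h
  have hlog : log α ≤ log ρ := log_le_log hα0 h
  have h1 : log (1 - α) < 0 := log_neg (by linarith) (by linarith)
  simp only [binomExponent, binEntropy, log_inv] at hφ
  nlinarith [mul_le_mul_of_nonneg_left hlog hα0.le,
    mul_pos (by linarith : 0 < 1 - α) (neg_pos.mpr h1)]

lemma binomExponent_nonneg (hα0 : 0 < α) (hα1 : α < 1) (hφ : binomExponent ρ α = 0)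
    (hx0 : 0 ≤ x) (hxα : x ≤ α) : 0 ≤ binomExponent ρ x := by
  set t := x / α
  have ht : x = t * α := by simp only [t]; field_simp
  have ht1 : 0 ≤ 1 - t := sub_nonneg.mpr (div_le_one_of_le₀ hxα hα0.le)
  have h := strictConcave_binEntropy.concaveOn.2 (⟨le_rfl, zero_le_one⟩ : (0 : ℝ) ∈ Set.Icc 0 1)
    (⟨hα0.le, hα1.le⟩ : α ∈ Set.Icc 0 1) ht1 (by positivity : 0 ≤ t) (by ring)
  simp only [smul_eq_mul, mul_zero, zero_add, binEntropy_zero] at h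
  simp only [binomExponent] at hφ ⊢
  rw [← ht] at h
  have : x * log ρ + t * binEntropy α = t * (α * log ρ + binEntropy α) := by rw [ht]; ring
  rw [hφ, mul_zero] at this
  linarith

lemma negMulLog_le_tangent {a : ℝ} (ha : 0 < a) (hx : 0 ≤ x) :
    negMulLog x ≤ negMulLog a - (log a + 1) * (x - a) := by
  rcases hx.eq_or_lt with rfl | hx
  · simp [negMulLog]; nlinarith
  have h := one_sub_inv_le_log_of_pos (by positivity : 0 < x / a)
  rw [log_div hx.ne' ha.ne', inv_div] at h
  have : x - a ≤ x * (log x - log a) := by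
    have := mul_le_mul_of_nonneg_left h hx.le
    rwa [mul_sub, mul_one, mul_div_cancel₀ _ hx.ne'] at this
  simp only [negMulLog]
  nlinarith

/-- The tangent line of the concave function `binomExponent ρ` at its zero `α`. -/
lemma binomExponent_le (hα0 : 0 < α) (hα1 : α < 1) (hφ : binomExponent ρ α = 0)
    (hx0 : 0 ≤ x) (hx1 : x ≤ 1) :
    binomExponent ρ x ≤ (α - x) * (log α - log ρ - log (1 - α)) := by
  have h1 := negMulLog_le_tangent hα0 hx0
  have h2 := negMulLog_le_tangent (by linarith : 0 < 1 - α) (by linarith : 0 ≤ 1 - x)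
  rw [binomExponent, binEntropy_eq_negMulLog_add_negMulLog_one_sub] at hφ ⊢
  nlinarith

lemma exp_mul_binomExponent (hρ : 0 < ρ) {m h : ℕ} (h0 : 0 < h) (hm : h < m) :
    exp (m * binomExponent ρ (h / m)) = ρ ^ h * m ^ m / (h ^ h * ((m : ℝ) - h) ^ (m - h)) := by
  have hm0 : (0 : ℝ) < m := by exact_mod_cast h0.trans hm
  have hh0 : (0 : ℝ) < h := by exact_mod_cast h0
  have hmh : (0 : ℝ) < m - h := by simp [hm]
  have hexp : (m : ℝ) * binomExponent ρ (h / m) =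
      h * log ρ + m * log m - (h * log h + ((m - h : ℕ) : ℝ) * log ((m : ℝ) - h)) := by
    rw [Nat.cast_sub hm.le]
    simp only [binomExponent, binEntropy, one_sub_div hm0.ne', log_inv,
      log_div hh0.ne' hm0.ne', log_div hmh.ne' hm0.ne']
    field_simp
    ring
  rw [hexp, exp_sub, exp_add, exp_add, ← log_pow, ← log_pow, ← log_pow, ← log_pow,
    exp_log (by positivity), exp_log (by positivity), exp_log (by positivity),
    exp_log (by positivity), mul_div_assoc]

end BinomExponent

section BinomialEstimates

lemma factorial_le_stirling {n : ℕ} (hn : n ≠ 0) :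
    (n.factorial : ℝ) ≤ exp 1 * √n * (n / exp 1) ^ n := by
  obtain ⟨k, rfl⟩ := Nat.exists_eq_succ_of_ne_zero hn
  have h := Stirling.stirlingSeq'_antitone (Nat.zero_le k)
  simp only [Function.comp_apply, Nat.succ_eq_add_one, zero_add, Stirling.stirlingSeq_one] at h
  rw [Stirling.stirlingSeq, div_le_iff₀ (by positivity)] at h
  calc ((k + 1).factorial : ℝ)
      ≤ exp 1 / √2 * (√(2 * (k + 1 : ℕ)) * ((k + 1 : ℕ) / exp 1) ^ (k + 1)) := h
    _ = exp 1 * √(k + 1 : ℕ) * ((k + 1 : ℕ) / exp 1) ^ (k + 1) := by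
      rw [sqrt_mul zero_le_two]; field_simp

lemma choose_le_stirling {m h : ℕ} (h0 : 0 < h) (hm : h < m) :
    (m.choose h : ℝ) ≤
      exp 1 / (2 * π) * √(m / (h * (m - h))) * (m ^ m / (h ^ h * ((m : ℝ) - h) ^ (m - h))) := by
  have hh : (0 : ℝ) < h := by exact_mod_cast h0
  have hmh : (0 : ℝ) < m - h := by simp [hm]
  have hfac : (m.choose h : ℝ) * h.factorial * (m - h).factorial = m.factorial := by
    exact_mod_cast Nat.choose_mul_factorial_mul_factorial hm.le
  have hlow_h := Stirling.le_factorial_stirling h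
  have hlow_mh := Stirling.le_factorial_stirling (m - h)
  have hup := factorial_le_stirling (n := m) (by omega)
  rw [Nat.cast_sub hm.le] at hlow_mh
  have hprod : √(2 * π * h) * (h / exp 1) ^ h * (√(2 * π * (m - h)) * ((m - h) / exp 1) ^ (m - h))
      ≤ h.factorial * (m - h).factorial :=
    mul_le_mul hlow_h hlow_mh (by positivity) (by positivity)
  have hexp : exp 1 ^ h * exp 1 ^ (m - h) = exp 1 ^ m := by
    rw [← pow_add, Nat.add_sub_cancel' hm.le]
  have hsq : √(2 * π * h) * √(2 * π * (m - h)) = 2 * π * √(h * (m - h)) := by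
    rw [← sqrt_mul (by positivity),
      show 2 * π * h * (2 * π * (m - h)) = (2 * π) ^ 2 * (h * (m - h)) by ring,
      sqrt_mul (by positivity), sqrt_sq (by positivity)]
  have hA : 0 < √(2 * π * h) * (h / exp 1) ^ h *
      (√(2 * π * (m - h)) * ((m - h) / exp 1) ^ (m - h)) := by
    positivity
  calc (m.choose h : ℝ) = m.factorial / (h.factorial * (m - h).factorial) := by
        rw [← hfac]; field_simp
    _ ≤ exp 1 * √m * (m / exp 1) ^ m /
        (√(2 * π * h) * (h / exp 1) ^ h * (√(2 * π * (m - h)) * ((m - h) / exp 1) ^ (m - h))) :=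
        div_le_div₀ (by positivity) hup hA hprod
    _ = _ := by
        rw [sqrt_div (Nat.cast_nonneg m), div_pow, div_pow, div_pow, ← hexp,
          show ∀ a b c d : ℝ, a * b * (c * d) = (a * c) * (b * d) by intros; ring, hsq]
        field_simp

/-- The weights `binomWeight p m k` with `p = h / (m - h)` peak at `k = h`, and they sum to
`(1 + p) ^ m`. -/
lemma pow_le_succ_mul_choose_mul {m h : ℕ} (hm : h < m) :
    (m : ℝ) ^ m ≤ (m + 1) * m.choose h * h ^ h * ((m : ℝ) - h) ^ (m - h) := by
  have hmh : (0 : ℝ) < m - h := by simp [hm]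
  set p : ℝ := h / (m - h)
  have hp : 0 ≤ p := by positivity
  have hpmh : p * (m - h) = h := div_mul_cancel₀ _ hmh.ne'
  have hpeak : ∀ k ∈ range (m + 1), binomWeight p m k ≤ binomWeight p m h := by
    intro k _
    rcases le_total k h with hk | hk
    · exact binomWeight.monotoneOn hp (by linarith) hk Set.self_mem_Iic hk
    · exact binomWeight.antitoneOn hp (by linarith) Set.self_mem_Ici hk hk
  have hsum : (p + 1) ^ m ≤ (m + 1) * binomWeight p m h := by
    calc (p + 1) ^ m = ∑ k ∈ range (m + 1), binomWeight p m k := by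
          rw [add_pow]; simp [binomWeight]
      _ ≤ ∑ k ∈ range (m + 1), binomWeight p m h := sum_le_sum hpeak
      _ = (m + 1) * binomWeight p m h := by simp
  have hpow : ((m : ℝ) - h) ^ m = (m - h) ^ h * (m - h) ^ (m - h) := by
    rw [← pow_add, Nat.add_sub_cancel' hm.le]
  have hp1 : (p + 1) * (m - h) = m := by linarith
  calc (m : ℝ) ^ m = (p + 1) ^ m * ((m : ℝ) - h) ^ m := by rw [← mul_pow, hp1]
    _ ≤ (m + 1) * binomWeight p m h * ((m : ℝ) - h) ^ m :=
        mul_le_mul_of_nonneg_right hsum (by positivity)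
    _ = (m + 1) * m.choose h * (p * (m - h)) ^ h * ((m : ℝ) - h) ^ (m - h) := by
        rw [hpow, binomWeight, mul_pow]; ring
    _ = _ := by rw [hpmh]

variable {ρ : ℝ} {m h : ℕ}

lemma binomWeight_le_exp (hρ : 0 < ρ) (h0 : 0 < h) (hm : h < m) :
    binomWeight ρ m h ≤
      exp 1 / (2 * π) * √(m / (h * (m - h))) * exp (m * binomExponent ρ (h / m)) := by
  rw [exp_mul_binomExponent hρ h0 hm, mul_div_assoc, mul_left_comm, binomWeight]
  exact mul_le_mul_of_nonneg_left (choose_le_stirling h0 hm) (by positivity)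

lemma exp_le_binomWeight (hρ : 0 < ρ) (h0 : 0 < h) (hm : h < m) :
    exp (m * binomExponent ρ (h / m)) ≤ (m + 1) * binomWeight ρ m h := by
  have hmh : (0 : ℝ) < m - h := by simp [hm]
  have hh : (0 : ℝ) < h := by exact_mod_cast h0
  rw [exp_mul_binomExponent hρ h0 hm, div_le_iff₀ (by positivity), binomWeight]
  calc ρ ^ h * m ^ m ≤ ρ ^ h * ((m + 1) * m.choose h * h ^ h * ((m : ℝ) - h) ^ (m - h)) :=
        mul_le_mul_of_nonneg_left (pow_le_succ_mul_choose_mul hm) (by positivity)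
    _ = _ := by ring

end BinomialEstimates

section Asymptotics

variable {ρ α : ℝ}

lemma log_sub_log_pos (hρ : 0 < ρ) (hα0 : 0 < α) (hα1 : α < 1) (hφ : binomExponent ρ α = 0) :
    0 < log α - log ρ :=
  sub_pos.mpr (log_lt_log hρ (lt_of_binomExponent_eq_zero hα0 hα1 hφ))

/-- `m φ(⌊α m⌋ / m)` stays bounded, so only the `1 / √m` of Stirling's formula remains. -/
lemma binomWeight_floor_le (hρ : 0 < ρ) (hα0 : 0 < α) (hα1 : α < 1)
    (hφ : binomExponent ρ α = 0) {m : ℕ} (hαm : 2 ≤ α * m) :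
    binomWeight ρ m ⌊α * m⌋₊ ≤
      exp 1 / (2 * π) * exp (log α - log ρ - log (1 - α)) * √(2 / (α * (1 - α)) / m) := by
  set L := log α - log ρ - log (1 - α)
  have hL : 0 ≤ L := by
    linarith [log_sub_log_pos hρ hα0 hα1 hφ,
      log_neg (by linarith : 0 < 1 - α) (by linarith : 1 - α < 1)]
  set h := ⌊α * m⌋₊
  have hm0 : (0 : ℝ) < m := by nlinarith
  have hh_le : (h : ℝ) ≤ α * m := Nat.floor_le (by positivity)
  have hh_gt : α * m - 1 < h := Nat.sub_one_lt_floor _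
  have h0 : 0 < h := by exact_mod_cast (by linarith : (0 : ℝ) < h)
  have hhm : h < m := by exact_mod_cast (show (h : ℝ) < m by nlinarith)
  have hexp : exp (m * binomExponent ρ (h / m)) ≤ exp L := by
    refine exp_le_exp.mpr ?_
    have hx1 : (h : ℝ) / m ≤ 1 := div_le_one_of_le₀ (by exact_mod_cast hhm.le) hm0.le
    calc (m : ℝ) * binomExponent ρ (h / m) ≤ m * ((α - h / m) * L) :=
          mul_le_mul_of_nonneg_left (binomExponent_le hα0 hα1 hφ (by positivity) hx1) hm0.le
      _ = (α * m - h) * L := by field_simp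
      _ ≤ 1 * L := by gcongr; linarith
      _ = L := one_mul L
  have hsqrt : √(m / (h * (m - h))) ≤ √(2 / (α * (1 - α)) / m) := by
    refine sqrt_le_sqrt ?_
    have hmh : (1 - α) * m ≤ m - h := by linarith
    rw [div_div, div_le_div_iff₀ (by simp [hhm]; positivity) (by nlinarith)]
    nlinarith [mul_le_mul (by linarith : α * m / 2 ≤ h) hmh (by nlinarith) (by positivity)]
  calc binomWeight ρ m h
      ≤ exp 1 / (2 * π) * √(m / (h * (m - h))) * exp (m * binomExponent ρ (h / m)) :=
        binomWeight_le_exp hρ h0 hhm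
    _ ≤ exp 1 / (2 * π) * √(2 / (α * (1 - α)) / m) * exp L := by gcongr
    _ = _ := by ring

lemma tendsto_binomWeight_floor (hρ : 0 < ρ) (hα0 : 0 < α) (hα1 : α < 1)
    (hφ : binomExponent ρ α = 0) :
    Tendsto (fun m : ℕ => binomWeight ρ m ⌊α * m⌋₊) atTop (𝓝 0) := by
  set D := exp 1 / (2 * π) * exp (log α - log ρ - log (1 - α))
  have hbound : ∀ᶠ m : ℕ in atTop, binomWeight ρ m ⌊α * m⌋₊ ≤ D * √(2 / (α * (1 - α)) / m) := by
    filter_upwards [eventually_ge_atTop ⌈2 / α⌉₊] with m hm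
    refine binomWeight_floor_le hρ hα0 hα1 hφ ?_
    rw [← div_le_iff₀' hα0]
    exact Nat.ceil_le.mp hm
  have hlim : Tendsto (fun m : ℕ => D * √(2 / (α * (1 - α)) / m)) atTop (𝓝 0) := by
    simpa using ((tendsto_const_div_atTop_nhds_zero_nat (2 / (α * (1 - α)))).sqrt).const_mul D
  exact squeeze_zero' (Eventually.of_forall fun m => binomWeight.nonneg hρ.le) hbound hlim

lemma inv_succ_le_binomWeight_floor (hρ : 0 < ρ) (hα0 : 0 < α) (hα1 : α < 1)
    (hφ : binomExponent ρ α = 0) {m : ℕ} (hαm : 1 ≤ α * m) :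
    ((m : ℝ) + 1)⁻¹ ≤ binomWeight ρ m ⌊α * m⌋₊ := by
  set h := ⌊α * m⌋₊
  have hm0 : (0 : ℝ) < m := by nlinarith
  have hh_le : (h : ℝ) ≤ α * m := Nat.floor_le (by positivity)
  have h0 : 0 < h := Nat.floor_pos.mpr hαm
  have hhm : h < m := by exact_mod_cast (show (h : ℝ) < m by nlinarith)
  have hφh : 0 ≤ binomExponent ρ (h / m) :=
    binomExponent_nonneg hα0 hα1 hφ (by positivity) ((div_le_iff₀ hm0).mpr hh_le)
  rw [inv_le_iff_one_le_mul₀' (by positivity)]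
  calc (1 : ℝ) ≤ exp (m * binomExponent ρ (h / m)) := one_le_exp (by positivity)
    _ ≤ (m + 1) * binomWeight ρ m h := exp_le_binomWeight hρ h0 hhm

lemma tendsto_pow_mul_inv_binomWeight (hρ : 0 < ρ) {i j : ℕ} (hji : j < i) :
    Tendsto (fun m : ℕ => (m : ℝ) ^ j * (binomWeight ρ m i)⁻¹) atTop (𝓝 0) := by
  set C := (i.factorial : ℝ) * 2 ^ i / ρ ^ i
  have hbound : ∀ᶠ m : ℕ in atTop, (m : ℝ) ^ j * (binomWeight ρ m i)⁻¹ ≤ C / m := by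
    filter_upwards [eventually_ge_atTop (2 * i), eventually_ge_atTop 1] with m hm hm1
    have hm0 : (0 : ℝ) < m := by exact_mod_cast hm1
    have hhalf : (m : ℝ) / 2 ≤ (m + 1 - i : ℕ) := by
      rw [Nat.cast_sub (by omega)]; push_cast
      have : (2 * i : ℝ) ≤ m := by exact_mod_cast hm
      linarith
    have hchoose : ρ ^ i * ((m / 2) ^ i / i.factorial) ≤ binomWeight ρ m i := by
      refine mul_le_mul_of_nonneg_left ((div_le_div_of_nonneg_right ?_ (by positivity)).trans
        (Nat.pow_le_choose i m)) (by positivity)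
      exact pow_le_pow_left₀ (by positivity) hhalf i
    have hpow : (m : ℝ) ^ j * m ≤ m ^ i := by
      rw [← pow_succ]; exact pow_le_pow_right₀ (by exact_mod_cast hm1) hji
    calc (m : ℝ) ^ j * (binomWeight ρ m i)⁻¹ ≤ m ^ j * (ρ ^ i * ((m / 2) ^ i / i.factorial))⁻¹ := by
          gcongr
      _ = C * (m ^ j / m ^ i) := by simp only [C]; rw [div_pow]; field_simp
      _ ≤ C * (1 / m) := by
          refine mul_le_mul_of_nonneg_left ?_ (by positivity)
          rw [div_le_div_iff₀ (by positivity) hm0]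
          linarith
      _ = C / m := mul_one_div C m
  exact squeeze_zero' (Eventually.of_forall fun m => by
    have := binomWeight.nonneg hρ.le (m := m) (i := i); positivity) hbound
    (tendsto_const_div_atTop_nhds_zero_nat C)

lemma tendsto_sq_mul_exp_neg_mul_floor_log {κ C : ℝ} (hκ : 0 ≤ κ) (hκC : 2 < κ * C) :
    Tendsto (fun N : ℕ => (N : ℝ) ^ 2 * exp (-κ * ⌊C * log N⌋₊)) atTop (𝓝 0) := by
  have hbound : ∀ᶠ N : ℕ in atTop,
      (N : ℝ) ^ 2 * exp (-κ * ⌊C * log N⌋₊) ≤ exp κ * (N : ℝ) ^ (-(κ * C - 2)) := by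
    filter_upwards [eventually_ge_atTop 1] with N hN
    have hN0 : (0 : ℝ) < N := by exact_mod_cast hN
    have hfl := Nat.sub_one_lt_floor (C * log N)
    have hsq : (N : ℝ) ^ 2 = exp (2 * log N) := by
      rw [show (2 : ℝ) * log N = log ((N : ℝ) ^ 2) by rw [log_pow]; norm_num,
        exp_log (by positivity)]
    calc (N : ℝ) ^ 2 * exp (-κ * ⌊C * log N⌋₊) ≤ (N : ℝ) ^ 2 * exp (κ - κ * C * log N) :=
          mul_le_mul_of_nonneg_left
            (exp_le_exp.mpr (by nlinarith [mul_le_mul_of_nonneg_left hfl.le hκ])) (by positivity)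
      _ = exp κ * (N : ℝ) ^ (-(κ * C - 2)) := by
          rw [rpow_def_of_pos hN0, hsq, ← exp_add, ← exp_add]
          ring_nf
  refine squeeze_zero' (Eventually.of_forall fun N => by positivity) hbound ?_
  have h := ((tendsto_rpow_neg_atTop (y := κ * C - 2) (by linarith)).comp
    tendsto_natCast_atTop_atTop).const_mul (exp κ)
  rw [mul_zero] at h
  exact h

lemma eventually_mul_log_add_le {a b d : ℝ} (ha : 0 ≤ a) (hd : 0 < d) :
    ∀ᶠ m : ℕ in atTop, a * log (m + 1) + b ≤ d * m := by
  set ε := d / (2 * (a + 1))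
  have hlog : ∀ᶠ x : ℝ in atTop, log x ≤ ε * x := by
    filter_upwards [isLittleO_log_id_atTop.bound (by positivity : 0 < ε), eventually_ge_atTop 0]
      with x hx hx0
    rw [norm_eq_abs, norm_eq_abs, id, abs_of_nonneg hx0] at hx
    exact (le_abs_self _).trans hx
  have hshift : Tendsto (fun m : ℕ => (m : ℝ) + 1) atTop atTop :=
    tendsto_atTop_add_const_right _ 1 tendsto_natCast_atTop_atTop
  filter_upwards [hshift.eventually hlog, eventually_ge_atTop ⌈2 * (|b| + d) / d⌉₊] with m hm hmb
  have hmb' : 2 * (|b| + d) ≤ d * m := (div_le_iff₀' hd).mp (Nat.ceil_le.mp hmb)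
  have haε : a * ε ≤ d / 2 := by
    rw [show a * ε = d / 2 * (a / (a + 1)) by simp only [ε]; field_simp]
    exact mul_le_of_le_one_right (by positivity) ((div_le_one (by positivity)).mpr (by linarith))
  have hm0 : (0 : ℝ) ≤ m + 1 := by positivity
  calc a * log (m + 1) + b ≤ a * ε * (m + 1) + |b| := by
        rw [mul_assoc]; gcongr; exact le_abs_self b
    _ ≤ d / 2 * (m + 1) + |b| := by gcongr
    _ ≤ d * m := by linarith

lemma eventually_of_eventually_succ {P : ℕ → Prop} (h : ∀ᶠ m in atTop, P (m + 1)) :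
    ∀ᶠ N in atTop, P N := by
  filter_upwards [(tendsto_sub_atTop_nat 1).eventually h, eventually_ge_atTop 1] with N hN hN1
  rwa [Nat.sub_add_cancel hN1] at hN

theorem eventually_EH_le (hρ : 0 < ρ) (hα0 : 0 < α) (hα1 : α < 1) (hφ : binomExponent ρ α = 0) :
    ∀ᶠ N : ℕ in atTop, EH ρ N ≤ ⌊α * ((N : ℝ) - 1)⌋₊ + 1 := by
  refine eventually_of_eventually_succ ?_
  -- the limit of the ratio `ρ (m - h) / (h + 1)` of consecutive weights at `h = ⌊α m⌋`
  set r := ρ * (1 - α) / α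
  have hr : r < 1 := by
    rw [div_lt_one hα0]; nlinarith [lt_of_binomExponent_eq_zero hα0 hα1 hφ]
  set q := (1 + r) / 2 with hq
  have hq0 : 0 ≤ q := by positivity
  have hq1 : q < 1 := by linarith
  have hgap : 0 < α * (q - r) := mul_pos hα0 (by linarith)
  filter_upwards [(tendsto_binomWeight_floor hρ hα0 hα1 hφ).eventually
      (ge_mem_nhds (sub_pos.mpr hq1)),
    eventually_ge_atTop ⌈ρ / (α * (q - r))⌉₊] with m hb hm
  have hcast : ((m + 1 : ℕ) : ℝ) - 1 = m := by push_cast; ring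
  rw [hcast]
  set h := ⌊α * m⌋₊
  have hh_gt : α * m - 1 < h := Nat.sub_one_lt_floor _
  have hm' : ρ ≤ α * (q - r) * m := by rw [← div_le_iff₀' hgap]; exact Nat.ceil_le.mp hm
  have hαr : α * r = ρ * (1 - α) := by simp only [r]; field_simp
  have hratio : ρ * (m - h) ≤ q * (h + 1) := by nlinarith
  calc EH ρ (m + 1) ≤ h + binomWeight ρ m h / (1 - q) := EH_le_add_binomWeight_div hρ hq0 hq1 hratio
    _ ≤ h + 1 := by gcongr; rwa [div_le_one (sub_pos.mpr hq1)]

noncomputable def lowerBoundError (ρ α κ C : ℝ) (m : ℕ) : ℝ :=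
  m * (binomWeight ρ m 2)⁻¹ + m ^ 2 * (binomWeight ρ m 3)⁻¹ +
    m ^ 2 * (m + 1) * (exp (2 * κ) * exp (-(κ * (α - ρ * exp κ))) ^ m) +
    (m + 1) ^ 2 * (exp (-κ) * exp (-κ * ⌊C * log (m + 1)⌋₊) / (1 - exp (-κ)))

lemma tendsto_lowerBoundError (hρ : 0 < ρ) {κ C : ℝ} (hκ : 0 < κ) (hβα : ρ * exp κ < α)
    (hκC : 2 < κ * C) : Tendsto (lowerBoundError ρ α κ C) atTop (𝓝 0) := by
  set r := exp (-(κ * (α - ρ * exp κ)))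
  have hr0 : 0 ≤ r := (exp_pos _).le
  have hr1 : r < 1 := exp_lt_one_iff.mpr (by nlinarith)
  have hfar := ((tendsto_pow_const_mul_const_pow_of_lt_one 3 hr0 hr1).add
    (tendsto_pow_const_mul_const_pow_of_lt_one 2 hr0 hr1)).const_mul (exp (2 * κ))
  have hnear := ((tendsto_sq_mul_exp_neg_mul_floor_log hκ.le hκC).comp
    (tendsto_add_atTop_nat 1)).const_mul (exp (-κ) / (1 - exp (-κ)))
  have h := (((tendsto_pow_mul_inv_binomWeight hρ (by norm_num : 1 < 2)).add
    (tendsto_pow_mul_inv_binomWeight hρ (by norm_num : 2 < 3))).add hfar).add hnear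
  simp only [add_zero, mul_zero] at h
  refine h.congr fun m => ?_
  simp only [lowerBoundError, Function.comp_apply, Nat.cast_add, Nat.cast_one]
  ring

theorem le_EH_floor_sub_floor (hρ : 0 < ρ) (hα0 : 0 < α) (hα1 : α < 1)
    (hφ : binomExponent ρ α = 0) {κ C : ℝ} (hκ : 0 < κ) (hC : 0 ≤ C) {m : ℕ} (hαm : 1 ≤ α * m)
    (hβm : 3 ≤ ρ * exp κ * m) (hlog : C * log (m + 1) + 2 ≤ (α - ρ * exp κ) * m) :
    (⌊α * m⌋₊ : ℝ) - ⌊C * log (m + 1)⌋₊ - α / ρ - lowerBoundError ρ α κ C m ≤ EH ρ (m + 1) := by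
  set z := exp (-κ)
  set β := ρ * exp κ
  have hzβ : z * β = ρ := by simp only [z, β]; rw [mul_left_comm, ← exp_add]; simp
  have hm1 : (1 : ℝ) ≤ m := by nlinarith only [hαm, hα1, m.cast_nonneg (α := ℝ)]
  set h := ⌊α * m⌋₊
  set M := ⌊C * log (m + 1)⌋₊
  set i₁ := ⌈β * m⌉₊
  have hh_le : (h : ℝ) ≤ α * m := Nat.floor_le (by positivity)
  have hh_gt : α * m - 1 < h := Nat.sub_one_lt_floor _
  have hM_le : (M : ℝ) ≤ C * log (m + 1) := Nat.floor_le (mul_nonneg hC (log_nonneg (by linarith)))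
  have hi₁_ge : β * m ≤ i₁ := Nat.le_ceil _
  have hi₁_lt : (i₁ : ℝ) < β * m + 1 := Nat.ceil_lt_add_one (by positivity)
  have h3 : 3 ≤ i₁ := by exact_mod_cast hβm.trans hi₁_ge
  have hi₁M : i₁ + M ≤ h := by
    have : ((i₁ + M : ℕ) : ℝ) < h + 1 := by push_cast; linarith
    exact Nat.lt_succ_iff.mp (by exact_mod_cast this)
  have hhm : h ≤ m := by exact_mod_cast (show (h : ℝ) ≤ m by nlinarith only [hh_le, hα1, hm1])
  have hratio : ρ * (m - i₁) ≤ z * (i₁ + 1) := by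
    calc ρ * (m - i₁) ≤ ρ * m := by nlinarith only [hρ, i₁.cast_nonneg (α := ℝ)]
      _ = z * (β * m) := by rw [← mul_assoc, hzβ]
      _ ≤ z * (i₁ + 1) := by gcongr; linarith
  have hfar : z ^ (h - i₁) ≤ exp (2 * κ) * exp (-(κ * (α - β))) ^ m := by
    have hd : (α - β) * m - 2 ≤ ((h - i₁ : ℕ) : ℝ) := by rw [Nat.cast_sub (by omega)]; linarith
    calc z ^ (h - i₁) = exp (((h - i₁ : ℕ) : ℝ) * -κ) := (exp_nat_mul _ _).symm
      _ ≤ exp (2 * κ + m * -(κ * (α - β))) :=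
        exp_le_exp.mpr (by linarith [mul_le_mul_of_nonneg_left hd hκ.le])
      _ = exp (2 * κ) * exp (-(κ * (α - β))) ^ m := by rw [exp_add, exp_nat_mul]
  have hnear : z ^ (h + 1 - (h - M)) = z * exp (-κ * M) := by
    rw [show h + 1 - (h - M) = M + 1 by omega, pow_succ', mul_comm (-κ), exp_nat_mul]
  have hK : ((h - M : ℕ) : ℝ) = h - M := Nat.cast_sub (by omega)
  have := le_EH_of_geometric_growth (α := α) hρ (exp_pos _).le (exp_lt_one_iff.mpr (by linarith))
    h3 (by omega) (Nat.sub_le h M) hhm (by rw [hK]; linarith [M.cast_nonneg (α := ℝ)]) hratio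
    (inv_succ_le_binomWeight_floor hρ hα0 hα1 hφ hαm) hfar hnear.le
  rw [hK] at this
  simpa only [lowerBoundError] using this

theorem eventually_le_EH (hρ : 0 < ρ) (hα0 : 0 < α) (hα1 : α < 1) (hφ : binomExponent ρ α = 0) :
    ∀ᶠ N : ℕ in atTop, (⌊α * ((N : ℝ) - 1)⌋₊ : ℝ) - ⌊3 / (log α - log ρ) * log N⌋₊ -
      α * (3 + ρ) / ρ ^ 2 ≤ EH ρ N := by
  refine eventually_of_eventually_succ ?_
  have hc := log_sub_log_pos hρ hα0 hα1 hφ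
  set C := 3 / (log α - log ρ)
  -- the weights grow by `exp κ = (α / ρ) ^ (3 / 4)` per step below `h`; any exponent in
  -- `(2 / 3, 1)` would do, as long as `κ C > 2` and `ρ exp κ < α`
  set κ := 3 / 4 * (log α - log ρ) with hκ
  have hκ0 : 0 < κ := by positivity
  have hC : 0 < C := div_pos three_pos hc
  have hκC : κ * C = 9 / 4 := by simp only [κ, C]; field_simp; ring
  have hβα : ρ * exp κ < α := by
    rw [← lt_div_iff₀' hρ, ← exp_log (by positivity : 0 < α / ρ), log_div hα0.ne' hρ.ne']
    exact exp_lt_exp.mpr (by linarith [hκ])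
  filter_upwards [(tendsto_lowerBoundError (C := C) hρ hκ0 hβα (by linarith)).eventually
      (ge_mem_nhds (by positivity : 0 < 3 * α / ρ ^ 2)),
    eventually_ge_atTop ⌈3 / (ρ * exp κ)⌉₊, eventually_ge_atTop ⌈1 / α⌉₊,
    eventually_mul_log_add_le (b := 2) hC.le (sub_pos.mpr hβα)] with m herr hm3 hm1 hlog
  have hαm : 1 ≤ α * m := by rw [← div_le_iff₀' hα0]; exact Nat.ceil_le.mp hm1
  have hβm : 3 ≤ ρ * exp κ * m := by rw [← div_le_iff₀' (by positivity)]; exact Nat.ceil_le.mp hm3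
  have hC₃ : α * (3 + ρ) / ρ ^ 2 = α / ρ + 3 * α / ρ ^ 2 := by field_simp; ring
  have hcast : ((m + 1 : ℕ) : ℝ) = m + 1 := by push_cast; ring
  rw [hcast, add_sub_cancel_right]
  linarith [le_EH_floor_sub_floor hρ hα0 hα1 hφ hκ0 hC.le hαm hβm hlog]

end Asymptotics

theorem mean_height_bounds_rho_lt_one_general (ρ α C₂ C₃ : ℝ) (hρ0 : 0 < ρ)
    (hα : α ∈ Set.Ioo (0 : ℝ) 1)
    (hsol : α ^ α * (1 - α) ^ (1 - α) = ρ ^ α)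
    (hC₂ : C₂ = 3 / (Real.log α - Real.log ρ))
    (hC₃ : C₃ = α * (3 + ρ) / ρ ^ 2) :
    ∀ᶠ N : ℕ in atTop,
      (⌊α * ((N : ℝ) - 1)⌋₊ : ℝ) - (⌊C₂ * Real.log N⌋₊ : ℝ) - C₃ ≤ EH ρ N ∧
      EH ρ N ≤ (⌊α * ((N : ℝ) - 1)⌋₊ : ℝ) + 1 := by
  obtain ⟨hα0, hα1⟩ := hα
  have hφ := binomExponent_eq_zero hρ0 hα0 hα1 hsol
  subst hC₂ hC₃
  filter_upwards [eventually_le_EH hρ0 hα0 hα1 hφ, eventually_EH_le hρ0 hα0 hα1 hφ]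
    with N hlow hup
  exact ⟨hlow, hup⟩

theorem mean_height_bounds_rho_lt_one (ρ α C₂ C₃ : ℝ) (hρ0 : 0 < ρ) (hρ1 : ρ < 1)
    (hα : α ∈ Set.Ioo (0 : ℝ) 1)
    (hsol : α ^ α * (1 - α) ^ (1 - α) = ρ ^ α)
    (huniq : ∀ x ∈ Set.Ioo (0 : ℝ) 1, x ^ x * (1 - x) ^ (1 - x) = ρ ^ x → x = α)
    (hC₂ : C₂ = 3 / (Real.log α - Real.log ρ))
    (hC₃ : C₃ = α * (3 + ρ) / ρ ^ 2) :
    ∀ᶠ N : ℕ in atTop,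
      (⌊α * ((N : ℝ) - 1)⌋₊ : ℝ) - (⌊C₂ * Real.log N⌋₊ : ℝ) - C₃ ≤ EH ρ N ∧
      EH ρ N ≤ (⌊α * ((N : ℝ) - 1)⌋₊ : ℝ) + 1 :=
  mean_height_bounds_rho_lt_one_general ρ α C₂ C₃ hρ0 hα hsol hC₂ hC₃
end

section
/- For all sufficiently large integers n, the sum of reciprocals of binomial coefficients satisfies ∑_{i=0}^{n−2} C(n−1,i)^{−1} ≤ 1 + 3/(n−1). -/
/-!
The reciprocals `1 / C(m, i)` are symmetric under `i ↦ m - i` and decrease towards the middle,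
so `∑_{i=0}^{m} 1 / C(m, i)` is at most twice its first three terms plus `(m - 5) / C(m, 3)`.
With the exact values of `C(m, i)` for `i ≤ 3`, the bound `1 + 3 / m` for the sum without its
last term exceeds this estimate by `(m - 5)(m - 8) / (m (m - 1) (m - 2))`, which is
nonnegative once `m ≥ 8`.
-/

open Finset Filter Real Topology

namespace Nat

theorem choose_le_choose_of_le_of_le_half {n r s : ℕ} (hrs : r ≤ s) (hs : s ≤ n / 2) :
    n.choose r ≤ n.choose s := by
  induction s, hrs using Nat.le_induction with
  | base => exact le_rfl
  | succ s _ ih => exact (ih (by omega)).trans (choose_le_succ_of_lt_half_left (by omega))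

theorem choose_le_choose_of_le_of_le_sub {n k i : ℕ} (hki : k ≤ i) (hik : i ≤ n - k) :
    n.choose k ≤ n.choose i := by
  rcases le_or_gt i (n / 2) with hi | hi
  · exact choose_le_choose_of_le_of_le_half hki hi
  · rw [← choose_symm (by omega : i ≤ n)]
    exact choose_le_choose_of_le_of_le_half (by omega) (by omega)

theorem cast_choose_three (K : Type*) [Field K] [CharZero K] (m : ℕ) :
    (m.choose 3 : K) = m * (m - 1) * (m - 2) / 6 := by
  induction m with
  | zero => simp
  | succ m ih =>
    rw [choose_succ_succ', cast_add, ih, cast_choose_two]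
    push_cast
    ring

end Nat

theorem sum_range_succ_inv_choose_le {m k : ℕ} (hk : 2 * k ≤ m + 1) :
    ∑ i ∈ range (m + 1), (m.choose i : ℝ)⁻¹ ≤
      2 * ∑ i ∈ range k, (m.choose i : ℝ)⁻¹ + ((m + 1 - 2 * k : ℕ) : ℝ) * (m.choose k : ℝ)⁻¹ := by
  set f : ℕ → ℝ := fun i ↦ (m.choose i : ℝ)⁻¹
  have htop : ∑ i ∈ Ico (m + 1 - k) (m + 1), f i = ∑ i ∈ range k, f i := by
    have := sum_Ico_reflect f 0 (by omega : k ≤ m + 1)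
    rw [Nat.sub_zero] at this
    rw [← this, Nat.Ico_zero_eq_range]
    refine sum_congr rfl fun j hj ↦ ?_
    simp only [f, Nat.choose_symm (by simp at hj; omega : j ≤ m)]
  have hmid : ∀ i ∈ Ico k (m + 1 - k), f i ≤ f k := fun i hi ↦ by
    simp only [mem_Ico] at hi
    exact inv_anti₀ (by exact_mod_cast Nat.choose_pos (by omega))
      (by exact_mod_cast Nat.choose_le_choose_of_le_of_le_sub hi.1 (by omega))
  calc ∑ i ∈ range (m + 1), f i
      = ∑ i ∈ range k, f i + ∑ i ∈ Ico k (m + 1 - k), f i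
          + ∑ i ∈ Ico (m + 1 - k) (m + 1), f i := by
        rw [← Nat.Ico_zero_eq_range, ← Nat.Ico_zero_eq_range,
          sum_Ico_consecutive f (Nat.zero_le k) (by omega : k ≤ m + 1 - k),
          sum_Ico_consecutive f (by omega) (by omega : m + 1 - k ≤ m + 1)]
    _ ≤ ∑ i ∈ range k, f i + (m + 1 - 2 * k) • f k + ∑ i ∈ range k, f i := by
        rw [htop]
        gcongr
        simpa [show m + 1 - k - k = m + 1 - 2 * k by omega] using sum_le_card_nsmul _ _ _ hmid
    _ = _ := by rw [nsmul_eq_mul]; ring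

theorem sum_range_inv_choose_le {m : ℕ} (hm : 8 ≤ m) :
    ∑ i ∈ range m, (m.choose i : ℝ)⁻¹ ≤ 1 + 3 / m := by
  have hx : (8 : ℝ) ≤ m := by exact_mod_cast hm
  have hcard : ((m + 1 - 2 * 3 : ℕ) : ℝ) = m - 5 := by
    rw [Nat.cast_sub (by omega)]
    push_cast
    ring
  have hsplit := sum_range_succ_inv_choose_le (m := m) (k := 3) (by omega)
  simp only [sum_range_succ, range_zero, sum_empty, Nat.choose_self, Nat.choose_zero_right,
    Nat.choose_one_right, Nat.cast_choose_two, Nat.cast_choose_three, hcard, Nat.cast_one,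
    inv_one] at hsplit
  calc ∑ i ∈ range m, (m.choose i : ℝ)⁻¹
      ≤ 2 * (1 + (m : ℝ)⁻¹ + ((m : ℝ) * (m - 1) / 2)⁻¹)
          + (m - 5) * ((m : ℝ) * (m - 1) * (m - 2) / 6)⁻¹ - 1 := by linarith
    _ = 1 + 3 / m - (m - 5) * (m - 8) / (m * (m - 1) * (m - 2)) := by
        have h1 : (m : ℝ) - 1 ≠ 0 := by linarith
        have h2 : (m : ℝ) - 2 ≠ 0 := by linarith
        field_simp
        ring
    _ ≤ 1 + 3 / m := by
        have h1 : (0 : ℝ) ≤ m - 1 := by linarith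
        have h2 : (0 : ℝ) ≤ m - 2 := by linarith
        have h5 : (0 : ℝ) ≤ m - 5 := by linarith
        have h8 : (0 : ℝ) ≤ m - 8 := by linarith
        exact sub_le_self _ <| div_nonneg (mul_nonneg h5 h8) (by positivity)

theorem sum_inv_binomial_le :
    ∀ᶠ n : ℕ in atTop,
      ∑ i ∈ Finset.range (n - 1), ((Nat.choose (n - 1) i : ℝ))⁻¹ ≤ 1 + 3 / ((n : ℝ) - 1) := by
  filter_upwards [eventually_ge_atTop 9] with n hn
  obtain ⟨m, rfl⟩ : ∃ m, n = m + 1 := ⟨n - 1, by omega⟩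
  simpa using sum_range_inv_choose_le (by omega : 8 ≤ m)
end
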